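/- Let L discrete random variables X₁,...,X_L be conditionally independent given Y, and let C₁,...,C_L satisfy the Markov structure where Cᵢ depends only on Xᵢ (given Y). Then I(X₁,...,X_L; C₁,...,C_L | Y) ≥ ∑ᵢ I(Xᵢ; Cᵢ | Y). -/

import Mathlib

/-!
Given `Y = y`, the pairs `(Xᵢ, Cᵢ)` are independent with laws `Pᵢ(a, b) = q i y a * r i a b`,
so the joint law of `(X, C)` and both of its marginals are products over `i`. The log-ratio in
`I(X; C | Y)` therefore splits into a sum over `i`, and integrating the `i`-th summand against
the product law only sees the `i`-th pair marginal `Pᵢ`. The inequality thus holds with equality.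
-/

open Finset

/-- Conditional mutual information I(A;B|Z) (in bits) of a joint pmf on Z × A × B. -/
noncomputable def condMI {Z A B : Type*} [Fintype Z] [Fintype A] [Fintype B]
    (p : Z → A → B → ℝ) : ℝ :=
  ∑ z, ∑ a, ∑ b, p z a b * Real.logb 2
    (p z a b * (∑ a', ∑ b', p z a' b') / ((∑ b', p z a b') * (∑ a', p z a' b)))

noncomputable def mutualInfo {A B : Type*} [Fintype A] [Fintype B] (P : A → B → ℝ) : ℝ :=
  ∑ a, ∑ b, P a b * Real.logb 2
    (P a b * (∑ a', ∑ b', P a' b') / ((∑ b', P a b') * (∑ a', P a' b)))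

theorem prod_mul_logb_div_prod {ι : Type*} [Fintype ι] (b : ℝ) {f g : ι → ℝ}
    (hg : ∀ i, f i ≠ 0 → g i ≠ 0) :
    (∏ i, f i) * Real.logb b ((∏ i, f i) / ∏ i, g i) =
      ∑ i, (∏ j, f j) * Real.logb b (f i / g i) := by
  rcases eq_or_ne (∏ i, f i) 0 with hf | hf
  · simp [hf]
  rw [← mul_sum, ← prod_div_distrib, Real.logb_prod]
  exact fun i _ => div_ne_zero (prod_ne_zero_iff.mp hf i (mem_univ i))
    (hg i (prod_ne_zero_iff.mp hf i (mem_univ i)))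

section

variable {ι Z A B : Type*} [Fintype ι] [DecidableEq ι] [Fintype Z] [Fintype A] [Fintype B]

theorem condMI_eq_sum_mutualInfo (p : Z → A → B → ℝ) :
    condMI p = ∑ z, mutualInfo (p z) :=
  rfl

theorem mutualInfo_const_mul (w : ℝ) (P : A → B → ℝ) :
    mutualInfo (fun a b => w * P a b) = w * mutualInfo P := by
  unfold mutualInfo
  rw [mul_sum]
  refine sum_congr rfl fun a _ => ?_
  rw [mul_sum]
  refine sum_congr rfl fun b _ => ?_
  rcases eq_or_ne w 0 with rfl | hw
  · simp
  simp only [← mul_sum]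
  have hcancel : ∀ x y u v : ℝ, w * x * (w * y) / (w * u * (w * v)) = x * y / (u * v) := by
    intro x y u v
    rw [show w * x * (w * y) = (w * w) * (x * y) by ring,
      show w * u * (w * v) = (w * w) * (u * v) by ring]
    exact mul_div_mul_left _ _ (mul_ne_zero hw hw)
  rw [hcancel, mul_assoc]

theorem mutualInfo_eq_of_sum_eq_one {P : A → B → ℝ} (hP : ∑ a, ∑ b, P a b = 1) :
    mutualInfo P = ∑ a, ∑ b, P a b * Real.logb 2 (P a b / ((∑ b', P a b') * ∑ a', P a' b)) := by
  simp only [mutualInfo, hP, mul_one]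

theorem sum_sum_prod_eq_prod_sum_sum (g : ι → A → B → ℝ) :
    ∑ x : ι → A, ∑ c : ι → B, ∏ i, g i (x i) (c i) = ∏ i, ∑ a, ∑ b, g i a b := by
  rw [sum_congr rfl fun x _ => (Fintype.prod_sum fun i b => g i (x i) b).symm]
  exact (Fintype.prod_sum fun i a => ∑ b, g i a b).symm

theorem sum_sum_prod_mul_apply (P : ι → A → B → ℝ) (i : ι)
    (hP : ∀ k, k ≠ i → ∑ a, ∑ b, P k a b = 1) (φ : A → B → ℝ) :
    ∑ x : ι → A, ∑ c : ι → B, (∏ k, P k (x k) (c k)) * φ (x i) (c i) =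
      ∑ a, ∑ b, P i a b * φ a b := by
  have hprod : ∀ (x : ι → A) (c : ι → B), (∏ k, P k (x k) (c k)) * φ (x i) (c i) =
      ∏ k, P k (x k) (c k) * (if k = i then φ (x k) (c k) else 1) := by
    intro x c
    rw [prod_mul_distrib, Fintype.prod_ite_eq']
  simp only [hprod]
  rw [sum_sum_prod_eq_prod_sum_sum fun k a b => P k a b * if k = i then φ a b else 1,
    Fintype.prod_eq_single i fun k hk => by simp [hk, hP k hk]]
  simp

theorem sum_sum_ite_prod [DecidableEq A] [DecidableEq B] (P : ι → A → B → ℝ) (i : ι)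
    (hP : ∀ k, k ≠ i → ∑ a, ∑ b, P k a b = 1) (a : A) (b : B) :
    ∑ x : ι → A, ∑ c : ι → B, (if x i = a ∧ c i = b then ∏ k, P k (x k) (c k) else 0) =
      P i a b := by
  have h := sum_sum_prod_mul_apply P i hP fun a' b' => if a' = a ∧ b' = b then 1 else 0
  simp only [mul_boole] at h
  rw [h]
  simp [ite_and]

theorem mutualInfo_pi (P : ι → A → B → ℝ) (hP0 : ∀ i a b, 0 ≤ P i a b)
    (hP1 : ∀ i, ∑ a, ∑ b, P i a b = 1) :
    mutualInfo (fun (x : ι → A) (c : ι → B) => ∏ i, P i (x i) (c i)) =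
      ∑ i, mutualInfo (P i) := by
  have hmargA : ∀ x : ι → A, ∑ c : ι → B, ∏ i, P i (x i) (c i) = ∏ i, ∑ b, P i (x i) b :=
    fun x => (Fintype.prod_sum _).symm
  have hmargB : ∀ c : ι → B, ∑ x : ι → A, ∏ i, P i (x i) (c i) = ∏ i, ∑ a, P i a (c i) :=
    fun c => (Fintype.prod_sum fun i a => P i a (c i)).symm
  have hmarg_ne : ∀ i a b, P i a b ≠ 0 → (∑ b', P i a b') * ∑ a', P i a' b ≠ 0 := by
    intro i a b h
    have hpos := (hP0 i a b).lt_of_ne' h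
    exact mul_ne_zero
      (hpos.trans_le (single_le_sum (fun b' _ => hP0 i a b') (mem_univ b))).ne'
      (hpos.trans_le (single_le_sum (fun a' _ => hP0 i a' b) (mem_univ a))).ne'
  rw [mutualInfo_eq_of_sum_eq_one (by simp [sum_sum_prod_eq_prod_sum_sum, hP1])]
  simp only [mutualInfo_eq_of_sum_eq_one (hP1 _), hmargA, hmargB, ← prod_mul_distrib,
    prod_mul_logb_div_prod _ fun i => hmarg_ne i _ _]
  rw [sum_congr rfl fun x _ => sum_comm, sum_comm]
  exact sum_congr rfl fun i _ => sum_sum_prod_mul_apply P i (fun k _ => hP1 k)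
    fun a b => Real.logb 2 (P i a b / ((∑ b', P i a b') * ∑ a', P i a' b))

theorem condMI_mul_pi (w : Z → ℝ) (P : ι → Z → A → B → ℝ) (hP0 : ∀ i z a b, 0 ≤ P i z a b)
    (hP1 : ∀ i z, ∑ a, ∑ b, P i z a b = 1) :
    condMI (fun z (x : ι → A) (c : ι → B) => w z * ∏ i, P i z (x i) (c i)) =
      ∑ i, condMI (fun z a b => w z * P i z a b) := by
  simp only [condMI_eq_sum_mutualInfo, mutualInfo_const_mul,
    mutualInfo_pi (fun i => P i _) (fun i => hP0 i _) (fun i => hP1 i _), mul_sum]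
  exact sum_comm

end

theorem condMI_decoupling_general {L : ℕ} {𝒴 𝒳 𝒞 : Type*}
    [Fintype 𝒴] [Fintype 𝒳] [Fintype 𝒞] [DecidableEq 𝒳] [DecidableEq 𝒞]
    (pY : 𝒴 → ℝ) (q : Fin L → 𝒴 → 𝒳 → ℝ) (r : Fin L → 𝒳 → 𝒞 → ℝ)
    (hq0 : ∀ i y a, 0 ≤ q i y a) (hq1 : ∀ i y, ∑ a, q i y a = 1)
    (hr0 : ∀ i a b, 0 ≤ r i a b) (hr1 : ∀ i a, ∑ b, r i a b = 1) :
    ∑ i, condMI (fun y (a : 𝒳) (b : 𝒞) =>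
        ∑ x : Fin L → 𝒳, ∑ c : Fin L → 𝒞,
          if x i = a ∧ c i = b then
            pY y * ∏ j, q j y (x j) * r j (x j) (c j) else 0) ≤
      condMI (fun y (x : Fin L → 𝒳) (c : Fin L → 𝒞) =>
        pY y * ∏ j, q j y (x j) * r j (x j) (c j)) := by
  set P : Fin L → 𝒴 → 𝒳 → 𝒞 → ℝ := fun j y a b => q j y a * r j a b
  have hP0 : ∀ j y a b, 0 ≤ P j y a b := fun j y a b => mul_nonneg (hq0 j y a) (hr0 j a b)
  have hP1 : ∀ j y, ∑ a, ∑ b, P j y a b = 1 := by simp [P, ← mul_sum, hr1, hq1]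
  have hmarg : ∀ i, (fun y (a : 𝒳) (b : 𝒞) => ∑ x : Fin L → 𝒳, ∑ c : Fin L → 𝒞,
      if x i = a ∧ c i = b then pY y * ∏ j, P j y (x j) (c j) else 0) =
      fun y a b => pY y * P i y a b := by
    intro i
    funext y a b
    simp only [← mul_ite_zero, ← mul_sum]
    rw [sum_sum_ite_prod (fun j => P j y) i (fun k _ => hP1 k y)]
  calc _ = ∑ i, condMI (fun y a b => pY y * P i y a b) :=
        sum_congr rfl fun i _ => congrArg condMI (hmarg i)
    _ ≤ _ := (condMI_mul_pi pY P hP0 hP1).ge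

/-- if X₁,...,X_L are conditionally independent given Y and each
Cᵢ depends only on Xᵢ (Markov Cᵢ − Xᵢ − (Y, rest)), i.e. the joint law
factorizes as P(y,x,c) = P(y)·∏ᵢ P(xᵢ|y)·P(cᵢ|xᵢ), then
I(X₁,...,X_L; C₁,...,C_L | Y) ≥ ∑ᵢ I(Xᵢ; Cᵢ | Y). -/
theorem condMI_decoupling {L : ℕ} {𝒴 𝒳 𝒞 : Type*}
    [Fintype 𝒴] [Fintype 𝒳] [Fintype 𝒞] [DecidableEq 𝒳] [DecidableEq 𝒞]
    (pY : 𝒴 → ℝ) (q : Fin L → 𝒴 → 𝒳 → ℝ) (r : Fin L → 𝒳 → 𝒞 → ℝ)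
    (hpY0 : ∀ y, 0 ≤ pY y) (hpY1 : ∑ y, pY y = 1)
    (hq0 : ∀ i y a, 0 ≤ q i y a) (hq1 : ∀ i y, ∑ a, q i y a = 1)
    (hr0 : ∀ i a b, 0 ≤ r i a b) (hr1 : ∀ i a, ∑ b, r i a b = 1) :
    ∑ i, condMI (fun y (a : 𝒳) (b : 𝒞) =>
        ∑ x : Fin L → 𝒳, ∑ c : Fin L → 𝒞,
          if x i = a ∧ c i = b then
            pY y * ∏ j, q j y (x j) * r j (x j) (c j) else 0) ≤
      condMI (fun y (x : Fin L → 𝒳) (c : Fin L → 𝒞) =>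
        pY y * ∏ j, q j y (x j) * r j (x j) (c j)) :=
  condMI_decoupling_general pY q r hq0 hq1 hr0 hr1
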